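/- arXiv:1406.3231 — 3 statements merged into one kernel-verified Lean document; each statement's English description precedes it below -/
import Mathlib

section
/- For n ≠ 0, the map ℤ⊕ℤ → ℤ⊕ℤ, (x,y) ↦ (x−y, n·x), is injective; equivalently its kernel is trivial. Consequently in the Mayer–Vietoris sequence the group preceding it maps to zero, yielding K^E(S³) = 0 for the corresponding twist. -/
/-- The map ℤ⊕ℤ → ℤ⊕ℤ, (x,y) ↦ (x−y, n·x), appearing in the Mayer–Vietoris sequence for
twisted K-theory of S³. -/
def mvMap (n : ℤ) : ℤ × ℤ →+ ℤ × ℤ :=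
  AddMonoidHom.mk' (fun p => (p.1 - p.2, n * p.1)) (by
    intro a b
    refine Prod.ext ?_ ?_ <;> simp [Prod.fst_add, Prod.snd_add] <;> ring)

@[simp]
lemma mvMap_apply (n : ℤ) (p : ℤ × ℤ) : mvMap n p = (p.1 - p.2, n * p.1) := rfl

lemma mvMap_eq_zero_iff {n : ℤ} (hn : n ≠ 0) {p : ℤ × ℤ} : mvMap n p = 0 ↔ p = 0 := by
  obtain ⟨x, y⟩ := p
  refine ⟨fun h => ?_, fun h => by simp_all⟩
  obtain ⟨hxy, hnx⟩ : x - y = 0 ∧ n * x = 0 := by simpa [Prod.ext_iff] using h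
  have hx : x = 0 := (mul_eq_zero.1 hnx).resolve_left hn
  have hy : y = 0 := by omega
  simp [hx, hy]

lemma mvMap_injective {n : ℤ} (hn : n ≠ 0) : Function.Injective (mvMap n) :=
  (injective_iff_map_eq_zero' _).2 fun _ => mvMap_eq_zero_iff hn

/-- For n ≠ 0 the map (x,y) ↦ (x−y, n·x) : ℤ⊕ℤ → ℤ⊕ℤ is injective;
equivalently its kernel is trivial (whence K^E(S³) = 0 in the Mayer–Vietoris sequence). -/
theorem stmt_7 (n : ℤ) (hn : n ≠ 0) :
    Function.Injective (mvMap n) ∧ (mvMap n).ker = ⊥ :=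
  ⟨mvMap_injective hn, (AddMonoidHom.ker_eq_bot_iff _).2 (mvMap_injective hn)⟩
end

section
/- Let G be a groupoid and Pic a Picard groupoid (symmetric monoidal groupoid with invertible objects). For a connected groupoid Π₁(M) with a chosen object m, the set of isomorphism classes of functors Π₁(M) → Pic is in bijection with π₀(Pic) × Hom(π₁(M,m), π₁(Pic)) / conjugation, which when π₁(Pic) is abelian equals π₀(Pic) ⊕ H¹(π₁(M,m); A) where A = Aut_Pic(unit). -/
open CategoryTheory MonoidalCategory

/-- Functors G ⥤ P up to natural isomorphism. -/
def functorIsoSetoid (G P : Type*) [Groupoid G] [Groupoid P] : Setoid (G ⥤ P) where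
  r F F' := Nonempty (F ≅ F')
  iseqv := ⟨fun F => ⟨Iso.refl F⟩, fun ⟨i⟩ => ⟨i.symm⟩, fun ⟨i⟩ ⟨j⟩ => ⟨i.trans j⟩⟩

/-!
A functor `F` out of a connected groupoid is determined up to isomorphism by the object `F m`
and its restriction to the vertex group at `m`: arrows `m ⟶ x` chosen once and for all transport
everything back to `m`. In a monoidal groupoid in which every object has a ⊗-inverse, the action
`u ↦ λ⁻¹ ≫ u ▷ X ≫ λ` identifies the vertex group at `𝟙_ P` with that at any `X` (whiskering
with a ⊗-inverse of `X` undoes it), and it commutes with every morphism. Through it the restriction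
of `F` becomes a homomorphism into the automorphisms of the unit (the monodromy of `F`), and
conjugating by an isomorphism `F m ≅ F' m` does not change it. So the isomorphism class of `F` is
the same datum as the class of `F m` together with the monodromy.
-/

namespace CategoryTheory.Groupoid

section Connected

variable {G : Type*} [Groupoid G] [IsPreconnected G]

open Classical in
noncomputable def chosenHom (m x : G) : m ⟶ x :=
  if h : m = x then eqToHom h else (nonempty_hom_of_preconnected_groupoid m x).some

@[simp]
lemma chosenHom_self (m : G) : chosenHom m m = 𝟙 m := by
  simp [chosenHom]

noncomputable def functorOfVertexGroupHom (m : G) {C : Type*} [Groupoid C] {X : C}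
    (ρ : (m ⟶ m) →* (X ⟶ X)) : G ⥤ C where
  obj _ := X
  map {x y} f := ρ (chosenHom m x ≫ f ≫ inv (chosenHom m y))
  map_id x := by
    rw [Category.id_comp, comp_inv]
    exact ρ.map_one
  map_comp {x y z} f g := by
    rw [← vertexGroup_mul, ← map_mul]
    simp

lemma functorOfVertexGroupHom_map_loop (m : G) {C : Type*} [Groupoid C] {X : C}
    (ρ : (m ⟶ m) →* (X ⟶ X)) (g : m ⟶ m) :
    (functorOfVertexGroupHom m ρ).map g = ρ g := by
  simp [functorOfVertexGroupHom]

noncomputable def natIsoOfIsoAtBase {m : G} {C : Type*} [Category C] {F F' : G ⥤ C}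
    (h : F.obj m ≅ F'.obj m) (hconj : ∀ g : m ⟶ m, F.map g ≫ h.hom = h.hom ≫ F'.map g) :
    F ≅ F' :=
  NatIso.ofComponents
    (fun x =>
      F.mapIso (asIso (chosenHom m x)).symm ≪≫ h ≪≫ F'.mapIso (asIso (chosenHom m x)))
    fun {x y} f => by
      have hloop := hconj (chosenHom m x ≫ f ≫ CategoryTheory.inv (chosenHom m y))
      simp only [Functor.map_comp, Functor.map_inv, Category.assoc] at hloop
      simp only [Iso.trans_hom, Functor.mapIso_hom, Iso.symm_hom, asIso_inv, asIso_hom,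
        Functor.map_inv, Category.assoc]
      rw [← cancel_epi (F.map (chosenHom m x)),
        ← cancel_mono (CategoryTheory.inv (F'.map (chosenHom m y)))]
      simp [hloop]

end Connected

/-- `Aut X` multiplies in the order of function composition, the vertex group in diagrammatic
order; hence the inverse. -/
noncomputable def vertexGroupMulEquivAut {C : Type*} [Groupoid C] (X : C) :
    (X ⟶ X) ≃* Aut X where
  toFun g := (asIso g).symm
  invFun a := a.inv
  left_inv g := rfl
  right_inv a := by ext; exact IsIso.inv_eq_of_hom_inv_id a.inv_hom_id
  map_mul' g h := by
    ext
    change CategoryTheory.inv (g ≫ h) = CategoryTheory.inv h ≫ CategoryTheory.inv g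
    simp

end CategoryTheory.Groupoid

namespace CategoryTheory.MonoidalCategory

lemma whiskerRight_injective {P : Type*} [Category P] [MonoidalCategory P] {X X' Y Z : P}
    (e : Y ⊗ Z ≅ 𝟙_ P) : Function.Injective (fun g : X ⟶ X' => g ▷ Y) := by
  intro g g' h
  have hYZ : g ▷ (Y ⊗ Z) = g' ▷ (Y ⊗ Z) := by
    simp only [whiskerRight_tensor, h]
  have hunit : g ▷ 𝟙_ P = g' ▷ 𝟙_ P := by
    rw [← cancel_epi (X ◁ e.hom), whisker_exchange, whisker_exchange, hYZ]
  simpa using hunit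

section UnitAction

variable {P : Type*} [Groupoid P] [MonoidalCategory P]

def unitAction (X : P) : (𝟙_ P ⟶ 𝟙_ P) →* (X ⟶ X) :=
  (Groupoid.vertexGroupIsomOfMap (λ_ X).hom).toMonoidHom.comp
    ((tensorRight X).mapVertexGroup (𝟙_ P))

lemma unitAction_apply (X : P) (u : 𝟙_ P ⟶ 𝟙_ P) :
    unitAction X u = (λ_ X).inv ≫ u ▷ X ≫ (λ_ X).hom := by
  simp [unitAction]
  rfl

lemma unitAction_conj {X Y : P} (e : X ≅ Y) (u : 𝟙_ P ⟶ 𝟙_ P) :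
    unitAction Y u = e.inv ≫ unitAction X u ≫ e.hom := by
  rw [Iso.eq_inv_comp, unitAction_apply, unitAction_apply, leftUnitor_inv_naturality_assoc,
    whisker_exchange_assoc, leftUnitor_naturality, Category.assoc, Category.assoc]

lemma unitAction_unit (u : 𝟙_ P ⟶ 𝟙_ P) : unitAction (𝟙_ P) u = u := by
  simp [unitAction_apply, unitors_equal, unitors_inv_equal]

lemma unitAction_tensor (X Y : P) (u : 𝟙_ P ⟶ 𝟙_ P) :
    unitAction (X ⊗ Y) u = unitAction X u ▷ Y := by
  simp [unitAction_apply]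

lemma unitAction_whiskerRight {X Y : P} (e : X ⊗ Y ≅ 𝟙_ P) (u : 𝟙_ P ⟶ 𝟙_ P) :
    unitAction X u ▷ Y = e.hom ≫ u ≫ e.inv := by
  rw [← unitAction_tensor, unitAction_conj e.symm, unitAction_unit, Iso.symm_inv, Iso.symm_hom]

lemma unitAction_bijective {X Y Z : P} (e : X ⊗ Y ≅ 𝟙_ P) (e' : Y ⊗ Z ≅ 𝟙_ P) :
    Function.Bijective (unitAction X) := by
  refine ⟨fun u v huv => ?_, fun a => ⟨e.inv ≫ a ▷ Y ≫ e.hom, ?_⟩⟩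
  · have h := congrArg (· ▷ Y) huv
    simpa [unitAction_whiskerRight e] using h
  · apply whiskerRight_injective e'
    simp [unitAction_whiskerRight e]

end UnitAction

section Invertible

variable {P : Type*} [Groupoid P] [MonoidalCategory P]
  (hinv : ∀ X : P, ∃ Y : P, Nonempty (X ⊗ Y ≅ 𝟙_ P))

noncomputable def unitActionEquiv (X : P) : (𝟙_ P ⟶ 𝟙_ P) ≃* (X ⟶ X) :=
  MulEquiv.ofBijective (unitAction X) <| by
    obtain ⟨Y, ⟨e⟩⟩ := hinv X
    obtain ⟨Z, ⟨e'⟩⟩ := hinv Y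
    exact unitAction_bijective e e'

lemma unitActionEquiv_symm_conj {X X' : P} (h : X ≅ X') (a : X ⟶ X) :
    (unitActionEquiv hinv X').symm (h.inv ≫ a ≫ h.hom) = (unitActionEquiv hinv X).symm a := by
  rw [MulEquiv.symm_apply_eq]
  conv_lhs => rw [← (unitActionEquiv hinv X).apply_symm_apply a]
  exact (unitAction_conj h _).symm

variable {G : Type*} [Groupoid G]

noncomputable def monodromy (m : G) (F : G ⥤ P) : (m ⟶ m) →* (𝟙_ P ⟶ 𝟙_ P) :=
  (unitActionEquiv hinv (F.obj m)).symm.toMonoidHom.comp (F.mapVertexGroup m)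

lemma monodromy_apply (m : G) (F : G ⥤ P) (g : m ⟶ m) :
    monodromy hinv m F g = (unitActionEquiv hinv (F.obj m)).symm (F.map g) :=
  rfl

lemma monodromy_eq_of_iso {m : G} {F F' : G ⥤ P} (α : F ≅ F') :
    monodromy hinv m F = monodromy hinv m F' := by
  ext g
  rw [monodromy_apply, monodromy_apply, ← NatIso.naturality_1 α g]
  exact (unitActionEquiv_symm_conj hinv (α.app m) (F.map g)).symm

lemma nonempty_iso_of_monodromy_eq [IsPreconnected G] {m : G} {F F' : G ⥤ P}
    (h : F.obj m ≅ F'.obj m) (hρ : monodromy hinv m F = monodromy hinv m F') :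
    Nonempty (F ≅ F') := by
  refine ⟨Groupoid.natIsoOfIsoAtBase h fun g => ?_⟩
  have hg := DFunLike.congr_fun hρ g
  rw [monodromy_apply, monodromy_apply, ← unitActionEquiv_symm_conj hinv h,
    MulEquiv.apply_eq_iff_eq] at hg
  simp [← hg]

lemma monodromy_functorOfVertexGroupHom [IsPreconnected G] (m : G) (X : P)
    (ρ : (m ⟶ m) →* (𝟙_ P ⟶ 𝟙_ P)) :
    monodromy hinv m
      (Groupoid.functorOfVertexGroupHom m ((unitActionEquiv hinv X).toMonoidHom.comp ρ)) = ρ := by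
  ext g
  rw [monodromy_apply, Groupoid.functorOfVertexGroupHom_map_loop]
  exact (unitActionEquiv hinv X).symm_apply_apply (ρ g)

end Invertible

end CategoryTheory.MonoidalCategory

theorem stmt_10_general {G : Type*} [Groupoid G] [IsConnected G] (m : G)
    {P : Type*} [Groupoid P] [MonoidalCategory P]
    (hinv : ∀ X : P, ∃ Y : P, Nonempty (X ⊗ Y ≅ 𝟙_ P)) :
    Nonempty ((Quotient (functorIsoSetoid G P)) ≃
      (Quotient (isIsomorphicSetoid P)) × ((m ⟶ m) →* Aut (𝟙_ P))) := by
  let Φ : Quotient (functorIsoSetoid G P) →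
      Quotient (isIsomorphicSetoid P) × ((m ⟶ m) →* (𝟙_ P ⟶ 𝟙_ P)) :=
    Quotient.lift (fun F => (⟦F.obj m⟧, monodromy hinv m F)) fun _ _ ⟨α⟩ =>
      Prod.ext (Quotient.sound ⟨α.app m⟩) (monodromy_eq_of_iso hinv α)
  have hΦ : Function.Bijective Φ := by
    constructor
    · rintro ⟨F⟩ ⟨F'⟩ hFF'
      obtain ⟨h⟩ := Quotient.exact (congrArg Prod.fst hFF')
      exact Quotient.sound (nonempty_iso_of_monodromy_eq hinv h (congrArg Prod.snd hFF'))
    · rintro ⟨⟨X⟩, ρ⟩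
      let F := Groupoid.functorOfVertexGroupHom m ((unitActionEquiv hinv X).toMonoidHom.comp ρ)
      exact ⟨⟦F⟧, Prod.ext rfl (monodromy_functorOfVertexGroupHom hinv m X ρ)⟩
  exact ⟨(Equiv.ofBijective Φ hΦ).trans <| Equiv.prodCongr (Equiv.refl _)
    (Groupoid.vertexGroupMulEquivAut (𝟙_ P)).monoidHomCongrRightEquiv⟩

/-- Let Π₁(M) be a connected groupoid with chosen object m, and let Pic be a
Picard groupoid (a symmetric monoidal groupoid all of whose objects are ⊗-invertible; its
π₁ = Aut(𝟙) is automatically abelian).  Then isomorphism classes of functors Π₁(M) → Pic are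
in bijection with π₀(Pic) × Hom(π₁(M,m), Aut(𝟙)) = π₀(Pic) ⊕ H¹(π₁(M,m); A), A = Aut(unit). -/
theorem stmt_10 {G : Type*} [Groupoid G] [IsConnected G] (m : G)
    {P : Type*} [Groupoid P] [MonoidalCategory P] [SymmetricCategory P]
    (hinv : ∀ X : P, ∃ Y : P, Nonempty (X ⊗ Y ≅ 𝟙_ P)) :
    Nonempty ((Quotient (functorIsoSetoid G P)) ≃
      (Quotient (isIsomorphicSetoid P)) × ((m ⟶ m) →* Aut (𝟙_ P))) :=
  stmt_10_general m hinv
end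

section
/- As a consequence of the previous computation: the complex Ω(S¹, L_λ) of forms with values in the flat line bundle of holonomy λ ≠ 1 is acyclic but not K-flat over Ω(S¹); specifically, tensoring the quasi-isomorphism 0 → Ω(S¹, L_λ) with Ω(S¹, L_{λ^{-1}}) over Ω(S¹) yields 0 → Ω(S¹), which is not a quasi-isomorphism since H^*(Ω(S¹)) ≅ ℝ ⊕ ℝ[1] ≠ 0. -/
open Real MeasureTheory Set
open scoped ENNReal NNReal

/-- Uniqueness for the linear ODE q' = μ q : solutions are q 0 · exp (μ x). -/
lemma lin_ode_aux (μ : ℝ) (q : ℝ → ℝ) (hq : Differentiable ℝ q)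
    (h : ∀ x, deriv q x = μ * q x) : ∀ x, q x = q 0 * Real.exp (μ * x) := by
  have hd : ∀ y, HasDerivAt (fun t => q t * Real.exp (-μ * t)) 0 y := by
    intro y
    have h1 : HasDerivAt (fun t : ℝ => -μ * t) (-μ) y := by
      simpa using (hasDerivAt_id y).const_mul (-μ)
    have h1e := h1.exp
    have h2 : HasDerivAt q (μ * q y) y := by
      rw [← h y]; exact (hq y).hasDerivAt
    have h3 := h2.mul h1e
    have he : μ * q y * Real.exp (-μ * y) + q y * (Real.exp (-μ * y) * -μ) = 0 := by ring
    rwa [he] at h3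
  have key : ∀ x, q x * Real.exp (-μ * x) = q 0 := by
    intro x
    have hc := is_const_of_deriv_eq_zero (fun y => (hd y).differentiableAt)
      (fun y => (hd y).deriv) x 0
    simpa using hc
  intro x
  have h1 : Real.exp (-μ * x) * Real.exp (μ * x) = 1 := by
    rw [← Real.exp_add]; ring_nf; exact Real.exp_zero
  calc q x = q x * Real.exp (-μ * x) * Real.exp (μ * x) := by
        rw [mul_assoc, h1, mul_one]
    _ = q 0 * Real.exp (μ * x) := by rw [key x]

/-- For λ > 0, λ ≠ 1, the complex Ω(S¹, L_λ) (modelled as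
f ↦ f' − log(λ)·f on smooth 2π-periodic functions) is acyclic — so 0 → Ω(S¹, L_λ) is a
quasi-isomorphism — but tensoring over Ω(S¹) with Ω(S¹, L_{λ⁻¹}) yields 0 → Ω(S¹)
(using Ω(S¹,L_λ) ⊗ Ω(S¹,L_{λ⁻¹}) ≅ Ω(S¹,L_1) = Ω(S¹)), which is NOT a quasi-isomorphism:
H⁰(Ω(S¹)) and H¹(Ω(S¹)) are nonzero (≅ ℝ).  Hence Ω(S¹, L_λ) is not K-flat. -/
theorem stmt_13 (lam : ℝ) (hpos : 0 < lam) (hne : lam ≠ 1) :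
    -- acyclicity of Ω(S¹, L_λ): H⁰ = 0 …
    (∀ f : ℝ → ℝ, ContDiff ℝ (⊤ : ℕ∞) f → Function.Periodic f (2 * π) →
      (∀ x, deriv f x - Real.log lam * f x = 0) → f = 0) ∧
    -- … and H¹ = 0
    (∀ g : ℝ → ℝ, ContDiff ℝ (⊤ : ℕ∞) g → Function.Periodic g (2 * π) →
      ∃ f : ℝ → ℝ, ContDiff ℝ (⊤ : ℕ∞) f ∧ Function.Periodic f (2 * π) ∧
        ∀ x, deriv f x - Real.log lam * f x = g x) ∧
    -- but the tensor product Ω(S¹) = Ω(S¹,L_λ) ⊗ Ω(S¹,L_{λ⁻¹}) has H⁰ ≠ 0 …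
    (∃ f : ℝ → ℝ, ContDiff ℝ (⊤ : ℕ∞) f ∧ Function.Periodic f (2 * π) ∧
      (∀ x, deriv f x = 0) ∧ f ≠ 0) ∧
    -- … and H¹ ≠ 0, so 0 → Ω(S¹) is not a quasi-isomorphism: L_λ is not K-flat
    (∃ g : ℝ → ℝ, ContDiff ℝ (⊤ : ℕ∞) g ∧ Function.Periodic g (2 * π) ∧
      ¬∃ f : ℝ → ℝ, ContDiff ℝ (⊤ : ℕ∞) f ∧ Function.Periodic f (2 * π) ∧
        ∀ x, deriv f x = g x) := by
  set μ := Real.log lam with hμdef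
  have hμ : μ ≠ 0 := by
    intro h
    rcases Real.log_eq_zero.mp h with h1 | h1 | h1
    · exact absurd h1 (ne_of_gt hpos)
    · exact hne h1
    · linarith
  have hexp : Real.exp (μ * (2 * π)) ≠ 1 := by
    intro h
    have h0 : Real.exp (μ * (2 * π)) = Real.exp 0 := by rw [h, Real.exp_zero]
    have h1 := Real.exp_injective h0
    rcases mul_eq_zero.mp h1 with h2 | h2
    · exact hμ h2
    · have : (2:ℝ) * π ≠ 0 := by positivity
      exact this h2
  refine ⟨?_, ?_, ?_, ?_⟩
  · -- H⁰ = 0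
    intro f hf hper hode
    have hdiff : Differentiable ℝ f := hf.differentiable (by simp)
    have h := lin_ode_aux μ f hdiff (fun x => by linarith [hode x])
    have hp := hper 0
    rw [h (0 + 2 * π)] at hp
    rw [zero_add] at hp
    have h4 : f 0 * (Real.exp (μ * (2 * π)) - 1) = 0 := by
      rw [mul_sub, mul_one, hp, sub_self]
    have h2 : f 0 = 0 := by
      rcases mul_eq_zero.mp h4 with h5 | h5
      · exact h5
      · exact absurd (by linarith : Real.exp (μ * (2 * π)) = 1) hexp
    funext x
    rw [h x, h2]; simp
  · -- H¹ = 0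
    intro g hg hgper
    set k : ℝ → ℝ := fun t => Real.exp (-μ * t) * g t with hkdef
    have hk : ContDiff ℝ (⊤ : ℕ∞) k :=
      (Real.contDiff_exp.comp (contDiff_const.mul contDiff_id)).mul hg
    have hkc : Continuous k := hk.continuous
    set F : ℝ → ℝ := fun x => ∫ t in (0:ℝ)..x, k t with hFdef
    have hFderiv : ∀ x, HasDerivAt F (k x) x := fun x =>
      (hkc.integral_hasStrictDerivAt 0 x).hasDerivAt
    have hFdiff : Differentiable ℝ F := fun x => (hFderiv x).differentiableAt
    have hF : ContDiff ℝ (⊤ : ℕ∞) F :=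
      contDiff_infty_iff_deriv.mpr ⟨hFdiff, by
        rw [show deriv F = k from funext fun x => (hFderiv x).deriv]; exact hk⟩
    set C : ℝ := Real.exp (μ * (2 * π)) * F (2 * π) / (1 - Real.exp (μ * (2 * π))) with hCdef
    set f : ℝ → ℝ := fun x => Real.exp (μ * x) * (C + F x) with hfdef
    have hfC : ContDiff ℝ (⊤ : ℕ∞) f :=
      (Real.contDiff_exp.comp (contDiff_const.mul contDiff_id)).mul
        (contDiff_const.add hF)
    have hfderiv : ∀ x, HasDerivAt f (μ * f x + g x) x := by
      intro x
      have h0 : HasDerivAt (fun t : ℝ => μ * t) μ x := by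
        simpa using (hasDerivAt_id x).const_mul μ
      have h1 := h0.exp
      have h2 : HasDerivAt (fun t => C + F t) (k x) x := (hFderiv x).const_add C
      have h3 := h1.mul h2
      have hek : Real.exp (μ * x) * k x = g x := by
        rw [hkdef]
        have h5 : Real.exp (μ * x) * Real.exp (-μ * x) = 1 := by
          rw [← Real.exp_add]; ring_nf; exact Real.exp_zero
        calc Real.exp (μ * x) * (Real.exp (-μ * x) * g x)
            = (Real.exp (μ * x) * Real.exp (-μ * x)) * g x := by ring
          _ = g x := by rw [h5, one_mul]
      have h6 : Real.exp (μ * x) * μ * (C + F x) + Real.exp (μ * x) * k x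
          = μ * f x + g x := by
        rw [hek, hfdef]; ring
      rw [← h6]
      exact h3
    have hfd : ∀ x, deriv f x = μ * f x + g x := fun x => (hfderiv x).deriv
    have hfdiff : Differentiable ℝ f := fun x => (hfderiv x).differentiableAt
    have hper : Function.Periodic f (2 * π) := by
      have hQdiff : Differentiable ℝ (fun x => f (x + 2 * π) - f x) :=
        (hfdiff.comp (differentiable_id.add_const _)).sub hfdiff
      have hQd : ∀ x, deriv (fun x => f (x + 2 * π) - f x) x
          = μ * (f (x + 2 * π) - f x) := by
        intro x
        have h1 : HasDerivAt (fun x => f (x + 2 * π)) (deriv f (x + 2 * π)) x := by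
          simpa [Function.comp_def] using (hfdiff (x + 2 * π)).hasDerivAt.comp x
            ((hasDerivAt_id x).add_const (2 * π))
        have h2 := (h1.sub (hfdiff x).hasDerivAt).deriv
        rw [show (fun x => f (x + 2 * π) - f x) = (fun x => f (x + 2 * π)) - f from rfl, h2, hfd (x + 2 * π), hfd x, hgper x]; ring
      have hQ := lin_ode_aux μ _ hQdiff hQd
      have hF0 : F 0 = 0 := by rw [hFdef]; simp
      have hden : 1 - Real.exp (μ * (2 * π)) ≠ 0 := by
        intro h; apply hexp; linarith
      have hQ0 : f (0 + 2 * π) - f 0 = 0 := by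
        rw [hfdef]
        simp only [zero_add, mul_zero, Real.exp_zero, one_mul]
        rw [hF0, add_zero, hCdef]
        linear_combination -(div_mul_cancel₀ (Real.exp (μ * (2 * π)) * F (2 * π)) hden)
      intro x
      have hx := hQ x
      rw [hQ0] at hx
      have : f (x + 2 * π) - f x = 0 := by simpa using hx
      linarith [this]
    exact ⟨f, hfC, hper, fun x => by rw [hfd x]; ring⟩
  · -- H⁰ of Ω(S¹) ≠ 0
    refine ⟨fun _ => 1, contDiff_const, fun x => rfl, fun x => by simp, ?_⟩
    intro h
    exact one_ne_zero (congrFun h 0)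
  · -- H¹ of Ω(S¹) ≠ 0
    refine ⟨fun _ => 1, contDiff_const, fun x => rfl, ?_⟩
    rintro ⟨f, hf, hper, hd⟩
    have hdiff : Differentiable ℝ f := hf.differentiable (by simp)
    have hconst : ∀ x y : ℝ, f x - x = f y - y := by
      intro x y
      have hD : Differentiable ℝ (fun t : ℝ => f t - t) :=
        hdiff.sub differentiable_id
      have hd0 : ∀ t : ℝ, deriv (fun t : ℝ => f t - t) t = 0 := by
        intro t
        have h5 : HasDerivAt (fun t : ℝ => f t - t) (deriv f t - 1) t :=
          (hdiff t).hasDerivAt.sub (hasDerivAt_id t)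
        rw [h5.deriv, hd t]
        simp
      exact is_const_of_deriv_eq_zero hD hd0 x y
    have hc := hconst (2 * π) 0
    have h2 : f (2 * π) = f 0 := by
      have := hper 0
      rwa [zero_add] at this
    rw [h2] at hc
    have : π = 0 := by linarith
    exact Real.pi_ne_zero this
end
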